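/- arXiv:2507.23438 — 2 statements merged into one kernel-verified Lean document; each statement's English description precedes it below -/
import Mathlib

section
/- For every integer d ≥ 3, A_{d-2} ≤ A_d. -/
/-- The Macaulay bound `a^⟨t⟩`: writing the (unique, greedy) binomial expansion
`a = C(k(t),t) + C(k(t-1),t-1) + ⋯ + C(k(j),j)` with `k(t) > ⋯ > k(j) ≥ j ≥ 1`,
`macaulay t a = C(k(t)+1,t+1) + C(k(t-1)+1,t) + ⋯ + C(k(j)+1,j+1)`.
(The value at `t = 0` is irrelevant for the definitions below.) -/
def macaulay : ℕ → ℕ → ℕ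
  | 0, a => a
  | t+1, a =>
    if a = 0 then 0
    else
      Nat.choose (Nat.findGreatest (fun m => Nat.choose m (t+1) ≤ a) (a + t + 1) + 1) (t+2)
        + macaulay t (a - Nat.choose
            (Nat.findGreatest (fun m => Nat.choose m (t+1) ≤ a) (a + t + 1)) (t+1))

/-- A finite O-sequence `(a_0, a_1, …, a_s)`, encoded as a nonempty list of
positive integers with `a_0 = 1` and `a_{t+1} ≤ a_t^⟨t⟩` for all `1 ≤ t ≤ s-1`. -/
def IsOSeq (l : List ℕ) : Prop :=
  l ≠ [] ∧ (∀ x ∈ l, 0 < x) ∧ l.getD 0 0 = 1 ∧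
    ∀ t : ℕ, 1 ≤ t → t + 1 < l.length → l.getD (t+1) 0 ≤ macaulay t (l.getD t 0)

/-- `numOSeq d` = the number `O_d` of finite O-sequences of multiplicity `d`. -/
noncomputable def numOSeq (d : ℕ) : ℕ := {l : List ℕ | IsOSeq l ∧ l.sum = d}.ncard

/-- `numASeq d` = the number `A_d` of finite O-sequences of multiplicity `d`
whose last entry is strictly greater than `1`. -/
noncomputable def numASeq (d : ℕ) : ℕ :=
  {l : List ℕ | IsOSeq l ∧ l.sum = d ∧ 1 < l.getLastD 0}.ncard

/-- `numOCond p n k d` = the number `O(p,n,k,d)` of finite O-sequences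
`(a_0,…,a_s)` of multiplicity `d` with `s ≤ n`, `a_i = C(p-1+i, i)` for all
`0 ≤ i ≤ k` (in particular `s ≥ k`), and `a_i < C(p-1+i, i)` for `k < i ≤ s`. -/
noncomputable def numOCond (p n k d : ℕ) : ℕ :=
  {l : List ℕ | IsOSeq l ∧ l.sum = d ∧ l.length - 1 ≤ n ∧ k ≤ l.length - 1 ∧
    (∀ i ≤ k, l.getD i 0 = Nat.choose (p - 1 + i) i) ∧
    (∀ i : ℕ, k < i → i < l.length → l.getD i 0 < Nat.choose (p - 1 + i) i)}.ncard

/-! ### Auxiliary lemmas -/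

lemma macaulay_zero (t : ℕ) : macaulay t 0 = 0 := by
  cases t <;> simp [macaulay]

lemma findGreatest_ge (t a : ℕ) (ha : 1 ≤ a) :
    t + 1 ≤ Nat.findGreatest (fun m => Nat.choose m (t+1) ≤ a) (a + t + 1) :=
  Nat.le_findGreatest (by omega) (by simp [Nat.choose_self, ha])

lemma macaulay_pos (t a : ℕ) (ha : 1 ≤ a) : 1 ≤ macaulay t a := by
  cases t with
  | zero => simpa [macaulay]
  | succ t =>
    have hg := findGreatest_ge t a ha
    simp only [macaulay]
    rw [if_neg (by omega)]
    have : 0 < Nat.choose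
        (Nat.findGreatest (fun m => Nat.choose m (t+1) ≤ a) (a + t + 1) + 1) (t+2) :=
      Nat.choose_pos (by omega)
    omega

lemma two_le_macaulay (t a : ℕ) (ht : 1 ≤ t) (ha : 2 ≤ a) : 2 ≤ macaulay t a := by
  obtain ⟨t, rfl⟩ : ∃ t', t = t' + 1 := ⟨t - 1, by omega⟩
  have hg := findGreatest_ge t a (by omega)
  simp only [macaulay]
  rw [if_neg (by omega)]
  set G := Nat.findGreatest (fun m => Nat.choose m (t+1) ≤ a) (a + t + 1) with hG
  have hspec : Nat.choose G (t+1) ≤ a :=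
    Nat.findGreatest_spec (P := fun m => Nat.choose m (t+1) ≤ a) (m := t + 1) (by omega)
      (by simp [Nat.choose_self]; omega)
  rcases Nat.eq_or_lt_of_le hspec with heq | hlt'
  · -- remainder is zero
    have hG2 : t + 2 ≤ G := by
      rcases Nat.eq_or_lt_of_le hg with h | h
      · exfalso; rw [← h] at heq; simp [Nat.choose_self] at heq; omega
      · omega
    have : Nat.choose (t+3) (t+2) ≤ Nat.choose (G+1) (t+2) :=
      Nat.choose_le_choose _ (by omega)
    rw [Nat.choose_succ_self_right] at this
    have h0 : a - Nat.choose G (t+1) = 0 := by omega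
    rw [h0, macaulay_zero]
    omega
  · have h1 : 0 < Nat.choose (G+1) (t+2) := Nat.choose_pos (by omega)
    have h2 : 1 ≤ macaulay t (a - Nat.choose G (t+1)) := macaulay_pos _ _ (by omega)
    omega

lemma getD_append_left (l t : List ℕ) (i : ℕ) (h : i < l.length) :
    (l ++ t).getD i 0 = l.getD i 0 := by
  simp [List.getD_eq_getElem?_getD, List.getElem?_append, h]

lemma getLastD_eq (l : List ℕ) : l.getLastD 0 = l.getD (l.length - 1) 0 := by
  rw [List.getLastD_eq_getLast?, List.getLast?_eq_getElem?]
  simp [List.getD_eq_getElem?_getD]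

lemma length_le_sum (l : List ℕ) (h : ∀ x ∈ l, 0 < x) : l.length ≤ l.sum := by
  induction l with
  | nil => simp
  | cons a t ih =>
    simp only [List.length_cons, List.sum_cons]
    have := h a (by simp)
    have := ih (fun x hx => h x (by simp [hx]))
    omega

lemma finite_oseq (d : ℕ) :
    {l : List ℕ | IsOSeq l ∧ l.sum = d ∧ 1 < l.getLastD 0}.Finite := by
  apply Set.Finite.subset
    (Set.Finite.image (List.map (Fin.val : Fin (d+1) → ℕ))
      (List.finite_length_le (Fin (d+1)) d))
  rintro l ⟨⟨-, hpos, -, -⟩, hsum, -⟩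
  have hx : ∀ x ∈ l, x < d + 1 := fun x hx => by
    have := List.le_sum_of_mem hx; omega
  refine ⟨l.attach.map (fun x => (⟨x.1, hx x.1 x.2⟩ : Fin (d+1))), ?_, ?_⟩
  · simp only [Set.mem_setOf_eq, List.length_map, List.length_attach]
    have := length_le_sum l hpos; omega
  · simp [List.map_map, Function.comp]

/-- For every integer `d ≥ 3`, `A_{d-2} ≤ A_d`. -/
theorem Ad_sub_two_le_Ad (d : ℕ) (hd : 3 ≤ d) : numASeq (d - 2) ≤ numASeq d := by
  apply Set.ncard_le_ncard_of_injOn (fun l => l ++ [2]) _ _ (finite_oseq d)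
  · rintro l ⟨⟨hne, hpos, h0, hcond⟩, hsum, hlast⟩
    have hlen : 0 < l.length := List.length_pos_iff.mpr hne
    have hlen2 : 2 ≤ l.length := by
      by_contra h
      have h1 : l.length = 1 := by omega
      rw [getLastD_eq, h1] at hlast
      simp only [show (1:ℕ)-1=0 from rfl, h0] at hlast
      omega
    have hlast2 : 2 ≤ l.getD (l.length - 1) 0 := by rw [← getLastD_eq]; omega
    refine ⟨⟨by simp, ?_, ?_, ?_⟩, ?_, ?_⟩
    · intro x hx
      rcases List.mem_append.mp hx with h | h
      · exact hpos x h
      · simp at h; omega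
    · rw [getD_append_left _ _ _ hlen]; exact h0
    · intro t ht htlen
      simp only [List.length_append, List.length_cons, List.length_nil] at htlen
      rcases lt_or_eq_of_le (by omega : t + 1 ≤ l.length) with h | h
      · rw [getD_append_left _ _ _ h, getD_append_left _ _ _ (by omega)]
        exact hcond t ht (by omega)
      · have hget : (l ++ [2]).getD (t+1) 0 = 2 := by
          rw [List.getD_eq_getElem?_getD, List.getElem?_append_right (by omega)]
          simp [h]
        rw [hget, getD_append_left _ _ _ (by omega)]
        have : t = l.length - 1 := by omega
        rw [this]
        exact two_le_macaulay _ _ (by omega) hlast2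
    · simp; omega
    · simp
  · intro l1 _ l2 _ h
    simpa using List.append_inj_left' h (by simp)
end

section
/- For every integer d ≥ 4, we have O_{d-1} < O_d < 2·O_{d-1}; equivalently, 1 < O_d/O_{d-1} < 2 as rational (or real) numbers. -/
/-! ### Auxiliary lemmas -/

lemma macaulay_zero_right : ∀ t, macaulay t 0 = 0
  | 0 => rfl
  | t+1 => by simp [macaulay]

lemma one_le_macaulay : ∀ t a, 1 ≤ a → 1 ≤ macaulay t a
  | 0, a, ha => ha
  | t+1, a, ha => by
    rw [macaulay, if_neg (by omega)]
    have h1 : t + 1 ≤ Nat.findGreatest (fun m => Nat.choose m (t+1) ≤ a) (a + t + 1) :=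
      Nat.le_findGreatest (by omega) (by simp [ha])
    have h2 : Nat.choose (t+2) (t+2) ≤
        Nat.choose (Nat.findGreatest (fun m => Nat.choose m (t+1) ≤ a) (a + t + 1) + 1) (t+2) :=
      Nat.choose_le_choose _ (by omega)
    simp [Nat.choose_self] at h2
    omega

lemma macaulay_one : ∀ t, macaulay t 1 = 1
  | 0 => rfl
  | t+1 => by
    have hfg : Nat.findGreatest (fun m => Nat.choose m (t+1) ≤ 1) (1 + t + 1) = t + 1 := by
      rw [Nat.findGreatest_eq_iff]
      refine ⟨by omega, fun _ => by simp, fun n hn hn' hP => ?_⟩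
      have : n = t + 2 := by omega
      subst this
      rw [Nat.choose_succ_self_right] at hP
      omega
    rw [macaulay, if_neg one_ne_zero, hfg, Nat.choose_self, Nat.choose_self]
    simp [macaulay_zero_right]

lemma getD_concat_lt (m : List ℕ) (b : ℕ) {i : ℕ} (h : i < m.length) :
    (m ++ [b]).getD i 0 = m.getD i 0 := List.getD_append _ _ _ _ h

lemma getD_concat_self (m : List ℕ) (b : ℕ) :
    (m ++ [b]).getD m.length 0 = b := by
  rw [List.getD_append_right _ _ _ _ le_rfl]
  simp

lemma getD_pos {l : List ℕ} (h2 : ∀ x ∈ l, 0 < x) {i : ℕ} (hi : i < l.length) :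
    0 < l.getD i 0 := by
  rw [List.getD_eq_getElem _ _ hi]
  exact h2 _ (List.getElem_mem hi)

lemma getD_replicate {n i : ℕ} (hi : i < n) : (List.replicate n 1).getD i 0 = 1 := by
  rw [List.getD_eq_getElem _ _ (by simpa using hi)]
  simp

lemma isOSeq_concat {m : List ℕ} (hm : m ≠ []) (b : ℕ) :
    IsOSeq (m ++ [b]) ↔ IsOSeq m ∧ 0 < b ∧
      (∀ t, 1 ≤ t → t + 1 = m.length → b ≤ macaulay t (m.getD t 0)) := by
  have hmlen : 0 < m.length := List.length_pos_iff.mpr hm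
  constructor
  · rintro ⟨-, h2, h3, h4⟩
    rw [getD_concat_lt m b hmlen] at h3
    refine ⟨⟨hm, fun x hx => h2 x (by simp [hx]), h3, fun t ht htl => ?_⟩,
      h2 b (by simp), fun t ht htl => ?_⟩
    · have := h4 t ht (by simp; omega)
      rwa [getD_concat_lt m b htl, getD_concat_lt m b (by omega)] at this
    · have := h4 t ht (by simp; omega)
      rwa [htl, getD_concat_self, getD_concat_lt m b (by omega)] at this
  · rintro ⟨⟨-, h2, h3, h4⟩, hb, hlast⟩
    refine ⟨by simp, fun x hx => ?_, by rwa [getD_concat_lt m b hmlen], fun t ht htl => ?_⟩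
    · rcases List.mem_append.mp hx with h | h
      · exact h2 x h
      · simp at h; omega
    · simp at htl
      rcases lt_or_eq_of_le (by omega : t + 1 ≤ m.length) with h | h
      · rw [getD_concat_lt m b h, getD_concat_lt m b (by omega)]
        exact h4 t ht h
      · rw [h, getD_concat_self, getD_concat_lt m b (by omega)]
        exact hlast t ht h

lemma oseq_set_finite (d : ℕ) : {l : List ℕ | IsOSeq l ∧ l.sum = d}.Finite := by
  apply Set.Finite.subset (((List.finite_length_le (Fin (d+1)) d).image
    (fun l : List (Fin (d+1)) => l.map Fin.val)))
  rintro l ⟨⟨-, hpos, -, -⟩, hsum⟩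
  have hx : ∀ x ∈ l, x < d + 1 := fun x hx =>
    Nat.lt_succ_of_le (hsum ▸ List.le_sum_of_mem hx)
  refine ⟨l.pmap (fun x h => (⟨x, h⟩ : Fin (d+1))) hx, ?_, ?_⟩
  · simp only [Set.mem_setOf_eq, List.length_pmap]
    exact hsum ▸ length_le_sum l hpos
  · show List.map Fin.val (List.pmap (fun x h => (⟨x, h⟩ : Fin (d+1))) l hx) = l
    rw [List.map_pmap]
    simp

/-- Decompose a nonempty list as `m ++ [b]`. -/
lemma exists_concat {l : List ℕ} (hl : l ≠ []) : ∃ m b, l = m ++ [b] := by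
  rcases List.eq_nil_or_concat l with h | ⟨m, b, h⟩
  · exact absurd h hl
  · exact ⟨m, b, by simpa [List.concat_eq_append] using h⟩

lemma key_counting (d : ℕ) (hd : 4 ≤ d) :
    numOSeq (d - 1) < numOSeq d ∧ numOSeq d < 2 * numOSeq (d - 1) := by
  classical
  set S : Set (List ℕ) := {l | IsOSeq l ∧ l.sum = d} with hSdef
  set S' : Set (List ℕ) := {l | IsOSeq l ∧ l.sum = d - 1} with hS'def
  set E : Set (List ℕ) := {l | (IsOSeq l ∧ l.sum = d) ∧ l.getLastD 0 = 1} with hEdef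
  set G : Set (List ℕ) := {l | (IsOSeq l ∧ l.sum = d) ∧ 1 < l.getLastD 0} with hGdef
  have hSfin : S.Finite := oseq_set_finite d
  have hS'fin : S'.Finite := oseq_set_finite (d - 1)
  have hEfin : E.Finite := hSfin.subset (fun l hl => hl.1)
  have hGfin : G.Finite := hSfin.subset (fun l hl => hl.1)
  -- S = E ∪ G, disjoint
  have hsplit : S = E ∪ G := by
    ext l
    constructor
    · rintro ⟨hO, hsum⟩
      obtain ⟨m, b, rfl⟩ := exists_concat hO.1
      have hb : 0 < b := hO.2.1 b (by simp)
      rcases eq_or_lt_of_le (Nat.succ_le_of_lt hb) with h | h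
      · exact Or.inl ⟨⟨hO, hsum⟩, by rw [List.getLastD_concat]; omega⟩
      · exact Or.inr ⟨⟨hO, hsum⟩, by rw [List.getLastD_concat]; omega⟩
    · rintro (⟨h, -⟩ | ⟨h, -⟩) <;> exact h
  have hdisj : Disjoint E G := by
    rw [Set.disjoint_left]
    rintro l ⟨-, h1⟩ ⟨-, h2⟩
    omega
  -- E is the image of S' under appending 1
  have hE : E = (fun m => m ++ [1]) '' S' := by
    ext l
    constructor
    · rintro ⟨⟨hO, hsum⟩, hlast⟩
      obtain ⟨m, b, rfl⟩ := exists_concat hO.1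
      rw [List.getLastD_concat] at hlast
      subst hlast
      have hm : m ≠ [] := by
        rintro rfl
        simp at hsum
        omega
      refine ⟨m, ⟨((isOSeq_concat hm 1).mp hO).1, ?_⟩, rfl⟩
      rw [List.sum_append] at hsum
      simp at hsum
      omega
    · rintro ⟨m, ⟨hO, hsum⟩, rfl⟩
      have hm : m ≠ [] := hO.1
      refine ⟨⟨(isOSeq_concat hm 1).mpr ⟨hO, one_pos, fun t ht htl => ?_⟩, ?_⟩,
        List.getLastD_concat⟩
      · exact one_le_macaulay t _ (getD_pos hO.2.1 (by omega))
      · rw [List.sum_append]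
        simp
        omega
  have hEcard : E.ncard = numOSeq (d - 1) := by
    rw [hE, Set.ncard_image_of_injective _ (List.append_left_injective [1])]
    rfl
  -- the "decrement last" map
  set ψ : List ℕ → List ℕ := fun l => l.dropLast ++ [l.getLastD 0 - 1] with hψdef
  have hψ_eq : ∀ (m : List ℕ) (b : ℕ), ψ (m ++ [b]) = m ++ [b - 1] := by
    intro m b
    simp only [hψdef, List.dropLast_concat, List.getLastD_concat]
  have hGne : ∀ l ∈ G, ∃ m b, l = m ++ [b] ∧ m ≠ [] ∧ 2 ≤ b := by
    rintro l ⟨⟨hO, hsum⟩, hlast⟩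
    obtain ⟨m, b, rfl⟩ := exists_concat hO.1
    rw [List.getLastD_concat] at hlast
    refine ⟨m, b, rfl, ?_, hlast⟩
    rintro rfl
    have := hO.2.2.1
    simp at this
    omega
  have hGsub : ψ '' G ⊆ S' := by
    rintro - ⟨l, hl, rfl⟩
    obtain ⟨m, b, rfl, hm, hb⟩ := hGne l hl
    obtain ⟨⟨hO, hsum⟩, -⟩ := hl
    obtain ⟨hOm, -, hcond⟩ := (isOSeq_concat hm b).mp hO
    rw [hψ_eq]
    refine ⟨(isOSeq_concat hm (b-1)).mpr ⟨hOm, by omega, fun t ht htl => ?_⟩, ?_⟩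
    · exact le_trans (by omega) (hcond t ht htl)
    · rw [List.sum_append] at hsum ⊢
      simp at hsum ⊢
      omega
  have hGinj : Set.InjOn ψ G := by
    intro l1 h1 l2 h2 heq
    obtain ⟨m1, b1, rfl, -, hb1⟩ := hGne l1 h1
    obtain ⟨m2, b2, rfl, -, hb2⟩ := hGne l2 h2
    rw [hψ_eq, hψ_eq] at heq
    obtain ⟨rfl, hb⟩ := List.append_inj' heq rfl
    simp at hb
    have : b1 = b2 := by omega
    rw [this]
  -- the all-ones sequence is in S' but not in ψ '' G
  have hr_mem : List.replicate (d-1) 1 ∈ S' := by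
    refine ⟨⟨by simp; omega, fun x hx => by rw [List.eq_of_mem_replicate hx]; omega,
      getD_replicate (by omega), fun t ht htl => ?_⟩, by simp⟩
    simp at htl
    rw [getD_replicate (by omega), getD_replicate (by omega), macaulay_one]
  have hr_not : List.replicate (d-1) 1 ∉ ψ '' G := by
    rintro ⟨l, hl, heq⟩
    obtain ⟨m, b, rfl, hm, hb⟩ := hGne l hl
    rw [hψ_eq] at heq
    have hrep : List.replicate (d-1) 1 = List.replicate (d-2) 1 ++ [1] := by
      have : d - 1 = (d - 2) + 1 := by omega
      rw [this, List.replicate_succ']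
    rw [hrep] at heq
    obtain ⟨rfl, hb1⟩ := List.append_inj' heq rfl
    simp at hb1
    have hb2 : b = 2 := by omega
    obtain ⟨⟨hO, -⟩, -⟩ := hl
    have hlen : (List.replicate (d-2) 1).length = d - 2 := by simp
    have hcond := hO.2.2.2 (d-3) (by omega)
      (by simp; omega)
    have e1 := getD_concat_self (List.replicate (d-2) 1) b
    rw [hlen] at e1
    rw [(by omega : d - 3 + 1 = d - 2)] at hcond
    have e2 : (List.replicate (d-2) 1 ++ [b]).getD (d-3) 0 = 1 := by
      rw [getD_concat_lt _ _ (by simp; omega), getD_replicate (by omega)]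
    rw [e1, e2, macaulay_one] at hcond
    omega
  -- counting
  have hcard : numOSeq d = E.ncard + G.ncard := by
    show S.ncard = _
    rw [hsplit]
    exact Set.ncard_union_eq hdisj hEfin hGfin
  have hψss : ψ '' G ⊂ S' := (Set.ssubset_iff_of_subset hGsub).mpr
    ⟨_, hr_mem, hr_not⟩
  have hGlt : G.ncard < numOSeq (d - 1) := by
    have := Set.ncard_lt_ncard hψss hS'fin
    rwa [Set.ncard_image_of_injOn hGinj] at this
  have hGpos : 0 < G.ncard := by
    rw [Set.ncard_pos hGfin]
    refine ⟨[1, d - 1], ⟨⟨by simp, ?_, rfl, fun t ht htl => by simp at htl; omega⟩, ?_⟩, ?_⟩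
    · intro x hx
      simp at hx
      rcases hx with rfl | rfl <;> omega
    · simp; omega
    · show 1 < [1, d-1].getLastD 0
      simp; omega
  omega

/-- For every integer `d ≥ 4`, `O_{d-1} < O_d < 2·O_{d-1}`;
equivalently, `1 < O_d / O_{d-1} < 2` as real numbers. -/
theorem Od_ratio_between_one_and_two (d : ℕ) (hd : 4 ≤ d) :
    (numOSeq (d - 1) < numOSeq d ∧ numOSeq d < 2 * numOSeq (d - 1)) ∧
    (1 < (numOSeq d : ℝ) / (numOSeq (d - 1) : ℝ) ∧
      (numOSeq d : ℝ) / (numOSeq (d - 1) : ℝ) < 2) := by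
  obtain ⟨h1, h2⟩ := key_counting d hd
  refine ⟨⟨h1, h2⟩, ?_, ?_⟩
  · rw [one_lt_div (by exact_mod_cast (by omega : 0 < numOSeq (d-1)))]
    exact_mod_cast h1
  · rw [div_lt_iff₀ (by exact_mod_cast (by omega : 0 < numOSeq (d-1)))]
    exact_mod_cast (by omega : numOSeq d < 2 * numOSeq (d - 1))
end
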